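/- Additivity of KL divergence over subintervals for measures sharing bridge structure: let T = {t_0 < ... < t_k} and suppose P and Q are path measures on [0,T] such that P factorizes as P_T ∏_{i=1}^k P_{|t_{i-1},t_i} and Q as Q_T ∏_{i=1}^k Q_{|t_{i-1},t_i} (both reciprocal with respect to T). Then D_KL(P | Q) = D_KL(P_T | Q_T) + Σ_{i=1}^k ∫ D_KL(P_{|t_{i-1},t_i}(·|a,b) | Q_{|t_{i-1},t_i}(·|a,b)) dP_{t_{i-1},t_i}(a,b). -/

import Mathlib

open MeasureTheory ProbabilityTheory
open scoped ENNReal NNReal Classical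

/-- Kullback–Leibler divergence `D_KL(μ | ν) = ∫ log(dμ/dν) dμ` when `μ ≪ ν` (and the
integrand is integrable), and `+∞` otherwise. -/

noncomputable def klDiv {α : Type*} [MeasurableSpace α] (μ ν : Measure α) : ℝ≥0∞ :=
  if μ ≪ ν ∧ Integrable (fun x => Real.log (μ.rnDeriv ν x).toReal) μ
  then ENNReal.ofReal (∫ x, Real.log (μ.rnDeriv ν x).toReal ∂μ)
  else ⊤

/-!
Pushing forward along the injective map `ω ↦ (π ω, ω)` does not change the divergence, so
`D(P | Q)` is the divergence between the joint laws of skeleton and path, which disintegrate as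
`P_𝒯 ⊗ₘ PJ.condKernel` and `Q_𝒯 ⊗ₘ QJ.condKernel`. The chain rule splits it into `D(P_𝒯 | Q_𝒯)`
plus the `P_𝒯`-average of the divergence between the conditional laws. By reciprocity these are
products of bridges, and the divergence between product measures is the sum of the divergences.
-/

namespace ProbabilityTheory.Kernel

variable {α β : Type*} [MeasurableSpace α] [MeasurableSpace β]
  [MeasurableSpace.CountableOrCountablyGenerated α β] (κ η : Kernel α β)
  [IsFiniteKernel κ] [IsFiniteKernel η]

lemma rnDeriv_measure_compProd_right (μ : Measure α) [IsFiniteMeasure μ] :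
    (μ ⊗ₘ κ).rnDeriv (μ ⊗ₘ η) =ᵐ[μ ⊗ₘ η] fun p ↦ κ.rnDeriv η p.1 p.2 := by
  have hdecomp : μ ⊗ₘ κ = μ ⊗ₘ κ.singularPart η
      + (μ ⊗ₘ η).withDensity fun p ↦ κ.rnDeriv η p.1 p.2 := by
    conv_lhs => rw [← κ.rnDeriv_add_singularPart η]
    rw [Measure.compProd_add_right, Measure.compProd_withDensity (measurable_rnDeriv κ η),
      add_comm]
  exact (Measure.eq_rnDeriv (measurable_rnDeriv κ η)
    (Measure.MutuallySingular.compProd_of_right μ μ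
      (ae_of_all _ (mutuallySingular_singularPart κ η))) hdecomp).symm

end ProbabilityTheory.Kernel

/-- Mathlib's `InformationTheory.klDiv` carries the correction `ν.real univ - μ.real univ`, which
vanishes for probability measures. -/
lemma klDiv_eq_informationTheory_klDiv {α : Type*} [MeasurableSpace α] (μ ν : Measure α)
    [IsProbabilityMeasure μ] [IsProbabilityMeasure ν] :
    klDiv μ ν = InformationTheory.klDiv μ ν := by
  simp only [klDiv, InformationTheory.klDiv_def, probReal_univ, add_sub_cancel_right]
  rfl

namespace InformationTheory

variable {α β : Type*} [MeasurableSpace α] [MeasurableSpace β]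

lemma klDiv_map_of_leftInverse (μ ν : Measure α) [IsFiniteMeasure μ] [IsFiniteMeasure ν]
    {f : α → β} {g : β → α} (hf : Measurable f) (hg : Measurable g)
    (hgf : Function.LeftInverse g f) :
    klDiv (μ.map f) (ν.map f) = klDiv μ ν := by
  refine le_antisymm (klDiv_map_le μ ν hf) ?_
  calc klDiv μ ν = klDiv ((μ.map f).map g) ((ν.map f).map g) := by
        simp only [Measure.map_map hg hf, hgf.comp_eq_id, Measure.map_id]
    _ ≤ klDiv (μ.map f) (ν.map f) := klDiv_map_le _ _ hg

lemma klDiv_prod (μ ν : Measure α) (μ' ν' : Measure β) [IsProbabilityMeasure μ]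
    [IsFiniteMeasure ν] [IsProbabilityMeasure μ'] [IsProbabilityMeasure ν'] :
    klDiv (μ.prod μ') (ν.prod ν') = klDiv μ ν + klDiv μ' ν' := by
  -- swapping the factors turns the conditional term into a divergence with a common kernel
  have hswap : klDiv (μ.prod μ') (μ.prod ν') = klDiv (μ'.prod μ) (ν'.prod μ) := by
    rw [← Measure.prod_swap, ← Measure.prod_swap (μ := ν'),
      klDiv_map_of_leftInverse _ _ measurable_swap measurable_swap Prod.swap_swap]
  rw [← Measure.compProd_const, ← Measure.compProd_const, klDiv_compProd_eq_add,
    Measure.compProd_const, Measure.compProd_const, hswap, ← Measure.compProd_const,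
    ← Measure.compProd_const (μ := ν'), klDiv_compProd_left]

theorem klDiv_pi_fin : ∀ {n : ℕ} {S : Fin n → Type*} [∀ i, MeasurableSpace (S i)]
    (μ ν : ∀ i, Measure (S i)) [∀ i, IsProbabilityMeasure (μ i)]
    [∀ i, IsProbabilityMeasure (ν i)],
    klDiv (Measure.pi μ) (Measure.pi ν) = ∑ i, klDiv (μ i) (ν i)
  | 0, _, _, μ, ν, _, _ => by simp [Measure.pi_of_empty μ, Measure.pi_of_empty ν]
  | n + 1, S, _, μ, ν, _, _ => by
    let e := MeasurableEquiv.piFinSuccAbove S 0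
    rw [← klDiv_map_of_leftInverse _ _ e.measurable e.symm.measurable e.symm_apply_apply,
      (measurePreserving_piFinSuccAbove μ 0).map_eq,
      (measurePreserving_piFinSuccAbove ν 0).map_eq, klDiv_prod, klDiv_pi_fin,
      Fin.sum_univ_succAbove _ 0]

theorem klDiv_pi {ι : Type*} [Fintype ι] {S : ι → Type*} [∀ i, MeasurableSpace (S i)]
    (μ ν : ∀ i, Measure (S i)) [∀ i, IsProbabilityMeasure (μ i)]
    [∀ i, IsProbabilityMeasure (ν i)] :
    klDiv (Measure.pi μ) (Measure.pi ν) = ∑ i, klDiv (μ i) (ν i) := by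
  let e := (Fintype.equivFin ι).symm
  let r := MeasurableEquiv.piCongrLeft S e
  rw [← (measurePreserving_piCongrLeft μ e).map_eq,
    ← (measurePreserving_piCongrLeft ν e).map_eq,
    klDiv_map_of_leftInverse _ _ r.measurable r.symm.measurable r.symm_apply_apply,
    klDiv_pi_fin, e.sum_comp fun i ↦ klDiv (μ i) (ν i)]

section Kernel

variable [MeasurableSpace.CountableOrCountablyGenerated α β]

lemma klDiv_kernel_apply_eq_ite (κ η : Kernel α β) [IsFiniteKernel κ] [IsFiniteKernel η]
    (a : α) :
    klDiv (κ a) (η a) = if κ a ≪ η a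
      then ∫⁻ b, ENNReal.ofReal (klFun (κ.rnDeriv η a b).toReal) ∂(η a) else ∞ := by
  split_ifs with hac
  · rw [klDiv_eq_lintegral_klFun_of_ac hac]
    refine lintegral_congr_ae ?_
    filter_upwards [Kernel.rnDeriv_eq_rnDeriv_measure (κ := κ) (η := η) (a := a)] with b hb
    rw [hb]
  · exact klDiv_of_not_ac hac

lemma measurable_klDiv_kernel (κ η : Kernel α β) [IsFiniteKernel κ] [IsFiniteKernel η] :
    Measurable fun a ↦ klDiv (κ a) (η a) := by
  simp_rw [klDiv_kernel_apply_eq_ite]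
  exact Measurable.ite (Kernel.measurableSet_absolutelyContinuous κ η)
    (Measurable.lintegral_kernel_prod_right (by fun_prop)) measurable_const

lemma klDiv_compProd_right (μ : Measure α) [IsFiniteMeasure μ] (κ η : Kernel α β)
    [IsFiniteKernel κ] [IsFiniteKernel η] :
    klDiv (μ ⊗ₘ κ) (μ ⊗ₘ η) = ∫⁻ a, klDiv (κ a) (η a) ∂μ := by
  by_cases hac : μ ⊗ₘ κ ≪ μ ⊗ₘ η
  · have hκη := Measure.absolutelyContinuous_compProd_right_iff.mp hac
    calc klDiv (μ ⊗ₘ κ) (μ ⊗ₘ η)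
        = ∫⁻ p, ENNReal.ofReal (klFun (κ.rnDeriv η p.1 p.2).toReal) ∂(μ ⊗ₘ η) := by
          rw [klDiv_eq_lintegral_klFun_of_ac hac]
          refine lintegral_congr_ae ?_
          filter_upwards [κ.rnDeriv_measure_compProd_right η μ] with p hp
          rw [hp]
      _ = ∫⁻ a, ∫⁻ b, ENNReal.ofReal (klFun (κ.rnDeriv η a b).toReal) ∂(η a) ∂μ :=
          Measure.lintegral_compProd (by fun_prop)
      _ = ∫⁻ a, klDiv (κ a) (η a) ∂μ := by
          refine lintegral_congr_ae ?_
          filter_upwards [hκη] with a ha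
          rw [klDiv_kernel_apply_eq_ite, if_pos ha]
  · have hpos : μ {a | ¬ κ a ≪ η a} ≠ 0 := by
      rwa [Measure.absolutelyContinuous_compProd_right_iff, ae_iff] at hac
    rw [klDiv_of_not_ac hac, eq_comm]
    refine lintegral_eq_top_of_measure_eq_top_ne_zero
      (measurable_klDiv_kernel κ η).aemeasurable fun h ↦ hpos (measure_mono_null ?_ h)
    exact fun a ha ↦ klDiv_of_not_ac ha

theorem klDiv_compProd_eq_add_lintegral (μ ν : Measure α) [IsFiniteMeasure μ]
    [IsFiniteMeasure ν] (κ η : Kernel α β) [IsMarkovKernel κ] [IsMarkovKernel η] :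
    klDiv (μ ⊗ₘ κ) (ν ⊗ₘ η) = klDiv μ ν + ∫⁻ a, klDiv (κ a) (η a) ∂μ := by
  rw [klDiv_compProd_eq_add, klDiv_compProd_right]

end Kernel

theorem klDiv_eq_add_lintegral_condKernel {Ω F : Type*} [MeasurableSpace Ω]
    [StandardBorelSpace Ω] [Nonempty Ω] [MeasurableSpace F] (P Q : Measure Ω)
    [IsFiniteMeasure P] [IsFiniteMeasure Q] {π : Ω → F} (hπ : Measurable π) :
    klDiv P Q = klDiv (P.map π) (Q.map π)
      + ∫⁻ f, klDiv ((P.map fun ω ↦ (π ω, ω)).condKernel f)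
          ((Q.map fun ω ↦ (π ω, ω)).condKernel f) ∂(P.map π) := by
  have hgraph : Measurable fun ω ↦ (π ω, ω) := hπ.prodMk measurable_id
  rw [← klDiv_map_of_leftInverse P Q hgraph measurable_snd fun _ ↦ rfl]
  have hchain := klDiv_compProd_eq_add_lintegral (P.map fun ω ↦ (π ω, ω)).fst
    (Q.map fun ω ↦ (π ω, ω)).fst (P.map fun ω ↦ (π ω, ω)).condKernel
    (Q.map fun ω ↦ (π ω, ω)).condKernel
  rwa [Measure.disintegrate, Measure.disintegrate, Measure.fst_map_prodMk measurable_id',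
    Measure.fst_map_prodMk measurable_id'] at hchain

end InformationTheory

/-- A path is encoded as the tuple of its segments `ω i : S i` over the subintervals, `π ω` is
its skeleton `(X_{t_0}, …, X_{t_k})`, and `PJ.condKernel` is the law of the path given its
skeleton. -/
theorem kl_additivity_subintervals (d k : ℕ)
    {S : Fin k → Type*} [∀ i, MeasurableSpace (S i)]
    [∀ i, StandardBorelSpace (S i)] [∀ i, Nonempty (S i)]
    (π : (∀ i, S i) → (Fin (k + 1) → Fin d → ℝ)) (hπ : Measurable π)
    (P Q : Measure (∀ i, S i)) [IsProbabilityMeasure P] [IsProbabilityMeasure Q]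
    (PJ QJ : Measure ((Fin (k + 1) → Fin d → ℝ) × (∀ i, S i)))
    [IsProbabilityMeasure PJ] [IsProbabilityMeasure QJ]
    (hPJ : PJ = P.map (fun ω => (π ω, ω))) (hQJ : QJ = Q.map (fun ω => (π ω, ω)))
    (κP κQ : ∀ i : Fin k, ProbabilityTheory.Kernel ((Fin d → ℝ) × (Fin d → ℝ)) (S i))
    [∀ i, ProbabilityTheory.IsMarkovKernel (κP i)] [∀ i, ProbabilityTheory.IsMarkovKernel (κQ i)]
    (hPrec : ∀ᵐ f ∂(P.map π),
      PJ.condKernel f = Measure.pi (fun i => κP i (f i.castSucc, f i.succ)))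
    (hQrec : ∀ᵐ f ∂(Q.map π),
      QJ.condKernel f = Measure.pi (fun i => κQ i (f i.castSucc, f i.succ))) :
    klDiv P Q
      = klDiv (P.map π) (Q.map π)
        + ∑ i : Fin k, ∫⁻ ab, klDiv (κP i ab) (κQ i ab)
            ∂(P.map (fun ω => ((π ω) i.castSucc, (π ω) i.succ))) := by
  have := Measure.isProbabilityMeasure_map (μ := P) hπ.aemeasurable
  have := Measure.isProbabilityMeasure_map (μ := Q) hπ.aemeasurable
  have hendpoints (i : Fin k) :
      Measurable fun f : Fin (k + 1) → Fin d → ℝ ↦ (f i.castSucc, f i.succ) := by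
    fun_prop
  subst hPJ hQJ
  simp only [klDiv_eq_informationTheory_klDiv]
  rw [InformationTheory.klDiv_eq_add_lintegral_condKernel P Q hπ]
  -- reciprocity of `Q` holds only `Q_𝒯`-a.e.; without `P_𝒯 ≪ Q_𝒯` both sides are `∞`
  by_cases hac : P.map π ≪ Q.map π
  swap
  · simp [InformationTheory.klDiv_of_not_ac hac]
  rw [lintegral_congr_ae (hPrec.and (hac.ae_le hQrec) |>.mono fun f hf ↦ by
      rw [hf.1, hf.2, InformationTheory.klDiv_pi]),
    lintegral_finsetSum _ fun i _ ↦ ?_]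
  swap
  · exact (InformationTheory.measurable_klDiv_kernel _ _).comp (hendpoints i)
  congr 2 with i
  rw [← lintegral_map (InformationTheory.measurable_klDiv_kernel _ _) (hendpoints i),
    Measure.map_map (hendpoints i) hπ]
  rfl
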